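/- arXiv:2109.04680 — 3 statements merged into one kernel-verified Lean document; each statement's English description precedes it below -/
import Mathlib

section
/- For every λ > 0 with λ ≠ μ and every μ > 0, the Green functions satisfy ∫_{ℝ²} G_λ(x) G_μ(x) dx = (ln λ − ln μ) / (4π(λ − μ)). -/
open MeasureTheory

noncomputable section

/-- ℝ², i.e. two-dimensional Euclidean space. -/
abbrev E2 := EuclideanSpace ℝ (Fin 2)

/-- The Green function `G_λ` of `-Δ + λ` on `ℝ²`, defined via the heat-kernel formula
`G_λ(x) = ∫₀^∞ (4πt)⁻¹ exp(-‖x‖²/(4t) - λt) dt`. -/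
noncomputable def greenFn (l : ℝ) (x : E2) : ℝ :=
  ∫ t in Set.Ioi (0 : ℝ), (4 * Real.pi * t)⁻¹ * Real.exp (-‖x‖ ^ 2 / (4 * t) - l * t)

/-!
Each Green function is the Laplace transform `G_λ = ∫₀^∞ e^{-λt} p_t dt` of the heat kernel
`p_t`, so by Tonelli `∫ G_λ G_μ = ∫∫ e^{-λt-μs} (∫ p_t p_s dx) dt ds`. The Gaussian integral gives
`∫ p_t p_s dx = (4π(t+s))⁻¹`, and writing `(t+s)⁻¹ = ∫₀^∞ e^{-(t+s)r} dr` and applying Tonelli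
once more turns the remaining double integral into `∫₀^∞ dr / ((λ+r)(μ+r)) = (ln λ - ln μ)/(λ - μ)`.
All of this is computed in `ℝ≥0∞`, where Tonelli needs no integrability hypotheses.
-/

open Set Real Filter Topology
open scoped ENNReal

section Tonelli

variable {α β γ : Type*} [MeasurableSpace α] [MeasurableSpace β] [MeasurableSpace γ]
  {μ : Measure α} {ν : Measure β} {ρ : Measure γ} [SFinite μ] [SFinite ν] [SFinite ρ]

theorem lintegral_lintegral_lintegral_rotate {f : α → β → γ → ℝ≥0∞}
    (hf : Measurable fun p : α × β × γ => f p.1 p.2.1 p.2.2) :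
    ∫⁻ a, ∫⁻ b, ∫⁻ c, f a b c ∂ρ ∂ν ∂μ = ∫⁻ b, ∫⁻ c, ∫⁻ a, f a b c ∂μ ∂ρ ∂ν := by
  have hab : Measurable fun p : α × β => ∫⁻ c, f p.1 p.2 c ∂ρ :=
    Measurable.lintegral_prod_right' (f := fun q : (α × β) × γ => f q.1.1 q.1.2 q.2) (by fun_prop)
  rw [lintegral_lintegral_swap hab.aemeasurable]
  refine lintegral_congr fun b => lintegral_lintegral_swap ?_
  exact (hf.comp (by fun_prop : Measurable fun p : α × γ => (p.1, b, p.2))).aemeasurable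

end Tonelli

theorem lintegral_Ioi_ofReal_of_hasDerivAt_of_nonneg {g g' : ℝ → ℝ} {a L : ℝ}
    (hderiv : ∀ x ∈ Ici a, HasDerivAt g (g' x) x) (hg' : ∀ x ∈ Ioi a, 0 ≤ g' x)
    (hg : Tendsto g atTop (𝓝 L)) :
    ∫⁻ x in Ioi a, ENNReal.ofReal (g' x) = ENNReal.ofReal (L - g a) := by
  rw [← ofReal_integral_eq_lintegral_ofReal (integrableOn_Ioi_deriv_of_nonneg' hderiv hg' hg)
    ((ae_restrict_iff' measurableSet_Ioi).mpr (.of_forall hg')),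
    integral_Ioi_of_hasDerivAt_of_nonneg' hderiv hg' hg]

theorem lintegral_Ioi_ofReal_exp_neg_mul {a : ℝ} (ha : 0 < a) :
    ∫⁻ r in Ioi 0, ENNReal.ofReal (exp (-(a * r))) = ENNReal.ofReal a⁻¹ := by
  have hint := integrableOn_exp_mul_Ioi (neg_neg_of_pos ha) 0
  simp only [neg_mul] at hint
  rw [← ofReal_integral_eq_lintegral_ofReal hint (.of_forall fun _ => (exp_pos _).le)]
  have := integral_exp_mul_Ioi (neg_neg_of_pos ha) 0
  simp only [neg_mul, mul_zero, exp_zero] at this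
  rw [this, neg_div_neg_eq, one_div]

theorem log_sub_log_div_sub_nonneg {l m : ℝ} (hl : 0 < l) (hm : 0 < m) :
    0 ≤ (log l - log m) / (l - m) := by
  rcases lt_trichotomy l m with h | rfl | h
  · exact div_nonneg_of_nonpos (by linarith [log_lt_log hl h]) (by linarith)
  · simp
  · exact div_nonneg (by linarith [log_lt_log hm h]) (by linarith)

theorem lintegral_Ioi_ofReal_inv_add_mul_add {l m : ℝ} (hl : 0 < l) (hm : 0 < m) (hne : l ≠ m) :
    ∫⁻ r in Ioi 0, ENNReal.ofReal ((l + r) * (m + r))⁻¹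
      = ENNReal.ofReal ((log l - log m) / (l - m)) := by
  have hml : m - l ≠ 0 := sub_ne_zero.mpr hne.symm
  have hderiv : ∀ r ∈ Ici (0 : ℝ), HasDerivAt (fun r => (log (l + r) - log (m + r)) / (m - l))
      ((l + r) * (m + r))⁻¹ r := by
    intro r (hr : 0 ≤ r)
    have hlr : l + r ≠ 0 := by positivity
    have hmr : m + r ≠ 0 := by positivity
    refine (((((hasDerivAt_id' r).const_add l).log hlr).sub
      (((hasDerivAt_id' r).const_add m).log hmr)).div_const (m - l)).congr_deriv ?_
    field_simp
    ring
  have hlim : Tendsto (fun r => (log (l + r) - log (m + r)) / (m - l)) atTop (𝓝 0) := by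
    have := ((tendsto_log_comp_add_sub_log l).sub (tendsto_log_comp_add_sub_log m)).div_const
      (m - l)
    simp only [sub_self, zero_div, sub_sub_sub_cancel_right] at this
    simpa only [add_comm] using this
  rw [lintegral_Ioi_ofReal_of_hasDerivAt_of_nonneg hderiv
    (fun r (hr : 0 < r) => by positivity) hlim]
  congr 1
  rw [add_zero, add_zero, zero_sub, ← neg_div, neg_sub, ← neg_div_neg_eq, neg_sub, neg_sub]

theorem lintegral_ofReal_exp_neg_mul_sq_norm {V : Type*} [NormedAddCommGroup V]
    [InnerProductSpace ℝ V] [FiniteDimensional ℝ V] [MeasurableSpace V] [BorelSpace V]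
    {c : ℝ} (hc : 0 < c) :
    ∫⁻ x : V, ENNReal.ofReal (exp (-(c * ‖x‖ ^ 2)))
      = ENNReal.ofReal ((π / c) ^ (Module.finrank ℝ V / 2 : ℝ)) := by
  have hval := GaussianFourier.integral_rexp_neg_mul_sq_norm (V := V) hc
  simp only [neg_mul] at hval
  have hint : Integrable fun x : V => exp (-(c * ‖x‖ ^ 2)) :=
    Integrable.of_integral_ne_zero (by rw [hval]; positivity)
  rw [← ofReal_integral_eq_lintegral_ofReal hint (.of_forall fun _ => (exp_pos _).le), hval]

def heatKernel (t : ℝ) (x : E2) : ℝ := (4 * π * t)⁻¹ * exp (-‖x‖ ^ 2 / (4 * t))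

@[fun_prop]
theorem measurable_heatKernel : Measurable fun p : ℝ × E2 => heatKernel p.1 p.2 := by
  unfold heatKernel
  fun_prop

theorem heatKernel_nonneg {t : ℝ} (ht : 0 ≤ t) (x : E2) : 0 ≤ heatKernel t x := by
  unfold heatKernel
  positivity

theorem heatKernel_mul_heatKernel {t s : ℝ} (ht : 0 < t) (hs : 0 < s) (x : E2) :
    heatKernel t x * heatKernel s x
      = (4 * π * t)⁻¹ * (4 * π * s)⁻¹ * exp (-((t + s) / (4 * t * s) * ‖x‖ ^ 2)) := by
  rw [heatKernel, heatKernel, mul_mul_mul_comm, ← exp_add]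
  congr 2
  field_simp
  ring

theorem lintegral_heatKernel_mul_heatKernel {t s : ℝ} (ht : 0 < t) (hs : 0 < s) :
    ∫⁻ x, ENNReal.ofReal (heatKernel t x) * ENNReal.ofReal (heatKernel s x)
      = ENNReal.ofReal (4 * π * (t + s))⁻¹ := by
  have hc : 0 < (t + s) / (4 * t * s) := by positivity
  have hA : 0 ≤ (4 * π * t)⁻¹ * (4 * π * s)⁻¹ := by positivity
  simp_rw [← ENNReal.ofReal_mul (heatKernel_nonneg ht.le _), heatKernel_mul_heatKernel ht hs,
    ENNReal.ofReal_mul hA]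
  rw [lintegral_const_mul' _ _ ENNReal.ofReal_ne_top, lintegral_ofReal_exp_neg_mul_sq_norm hc,
    ← ENNReal.ofReal_mul (by positivity)]
  congr 1
  rw [finrank_euclideanSpace_fin, Nat.cast_ofNat, div_self two_ne_zero, rpow_one]
  field_simp

theorem lintegral_Ioi_Ioi_exp_mul_exp_mul_inv_add {l m : ℝ} (hl : 0 < l) (hm : 0 < m)
    (hne : l ≠ m) :
    ∫⁻ t in Ioi 0, ∫⁻ s in Ioi 0,
      ENNReal.ofReal (exp (-(l * t))) * ENNReal.ofReal (exp (-(m * s))) *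
        ENNReal.ofReal (t + s)⁻¹ = ENNReal.ofReal ((log l - log m) / (l - m)) := by
  calc
    _ = ∫⁻ t in Ioi 0, ∫⁻ s in Ioi 0, ∫⁻ r in Ioi 0,
          ENNReal.ofReal (exp (-((l + r) * t))) * ENNReal.ofReal (exp (-((m + r) * s))) := by
        refine setLIntegral_congr_fun measurableSet_Ioi fun t (ht : 0 < t) => ?_
        refine setLIntegral_congr_fun measurableSet_Ioi fun s (hs : 0 < s) => ?_
        rw [← lintegral_Ioi_ofReal_exp_neg_mul (by positivity : 0 < t + s),
          ← lintegral_const_mul' _ _ (by finiteness)]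
        refine lintegral_congr fun r => ?_
        simp only [← ENNReal.ofReal_mul (exp_pos _).le, ← exp_add]
        congr 2
        ring
    _ = ∫⁻ r in Ioi 0, ∫⁻ t in Ioi 0, ∫⁻ s in Ioi 0,
          ENNReal.ofReal (exp (-((l + r) * t))) * ENNReal.ofReal (exp (-((m + r) * s))) :=
        (lintegral_lintegral_lintegral_rotate (by fun_prop)).symm
    _ = ∫⁻ r in Ioi 0, ENNReal.ofReal ((l + r) * (m + r))⁻¹ := by
        refine setLIntegral_congr_fun measurableSet_Ioi fun r (hr : 0 < r) => ?_
        rw [lintegral_lintegral_mul (by fun_prop) (by fun_prop),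
          lintegral_Ioi_ofReal_exp_neg_mul (by positivity),
          lintegral_Ioi_ofReal_exp_neg_mul (by positivity), ← ENNReal.ofReal_mul (by positivity),
          mul_inv]
    _ = _ := lintegral_Ioi_ofReal_inv_add_mul_add hl hm hne

def eGreenFn (l : ℝ) (x : E2) : ℝ≥0∞ :=
  ∫⁻ t in Ioi 0, ENNReal.ofReal (heatKernel t x) * ENNReal.ofReal (exp (-(l * t)))

theorem measurable_eGreenFn (l : ℝ) : Measurable (eGreenFn l) :=
  Measurable.lintegral_prod_right' (f := fun p : E2 × ℝ =>
    ENNReal.ofReal (heatKernel p.2 p.1) * ENNReal.ofReal (exp (-(l * p.2))))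
    (by fun_prop)

theorem greenFn_eq_toReal_eGreenFn (l : ℝ) (x : E2) : greenFn l x = (eGreenFn l x).toReal := by
  have hint : ∀ t, (4 * π * t)⁻¹ * exp (-‖x‖ ^ 2 / (4 * t) - l * t)
      = heatKernel t x * exp (-(l * t)) := by
    intro t
    rw [heatKernel, sub_eq_add_neg, exp_add, ← mul_assoc]
  simp_rw [greenFn, hint]
  rw [integral_eq_lintegral_of_nonneg_ae ((ae_restrict_iff' measurableSet_Ioi).mpr
    (.of_forall fun t (ht : 0 < t) => mul_nonneg (heatKernel_nonneg ht.le x) (exp_pos _).le))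
    (by fun_prop)]
  exact congrArg ENNReal.toReal (setLIntegral_congr_fun measurableSet_Ioi
    fun t (ht : 0 < t) => ENNReal.ofReal_mul (heatKernel_nonneg ht.le x))

theorem lintegral_eGreenFn_mul_eGreenFn {l m : ℝ} (hl : 0 < l) (hm : 0 < m) (hne : l ≠ m) :
    ∫⁻ x, eGreenFn l x * eGreenFn m x
      = ENNReal.ofReal (4 * π)⁻¹ * ENNReal.ofReal ((log l - log m) / (l - m)) := by
  calc
    _ = ∫⁻ x, ∫⁻ t in Ioi 0, ∫⁻ s in Ioi 0,
          ENNReal.ofReal (heatKernel t x) * ENNReal.ofReal (exp (-(l * t))) *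
            (ENNReal.ofReal (heatKernel s x) * ENNReal.ofReal (exp (-(m * s)))) :=
        lintegral_congr fun x => (lintegral_lintegral_mul (by fun_prop) (by fun_prop)).symm
    _ = ∫⁻ t in Ioi 0, ∫⁻ s in Ioi 0, ∫⁻ x,
          ENNReal.ofReal (heatKernel t x) * ENNReal.ofReal (exp (-(l * t))) *
            (ENNReal.ofReal (heatKernel s x) * ENNReal.ofReal (exp (-(m * s)))) :=
        lintegral_lintegral_lintegral_rotate (by fun_prop)
    _ = ∫⁻ t in Ioi 0, ∫⁻ s in Ioi 0, ENNReal.ofReal (4 * π)⁻¹ *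
          (ENNReal.ofReal (exp (-(l * t))) * ENNReal.ofReal (exp (-(m * s))) *
            ENNReal.ofReal (t + s)⁻¹) := by
        refine setLIntegral_congr_fun measurableSet_Ioi fun t (ht : 0 < t) => ?_
        refine setLIntegral_congr_fun measurableSet_Ioi fun s (hs : 0 < s) => ?_
        rw [lintegral_congr fun x => mul_mul_mul_comm _ _ _ _,
          lintegral_mul_const' _ _ (by finiteness), lintegral_heatKernel_mul_heatKernel ht hs,
          mul_inv, ENNReal.ofReal_mul (by positivity)]
        ring
    _ = _ := by
        simp_rw [lintegral_const_mul' _ _ ENNReal.ofReal_ne_top]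
        rw [lintegral_Ioi_Ioi_exp_mul_exp_mul_inv_add hl hm hne]

/-- For `λ, μ > 0` with `λ ≠ μ`, `∫_{ℝ²} G_λ G_μ = (ln λ - ln μ) / (4π(λ - μ))`. -/
theorem green_inner_product (lam mu : ℝ) (hlam : 0 < lam) (hmu : 0 < mu) (hne : lam ≠ mu) :
    ∫ x : E2, greenFn lam x * greenFn mu x
      = (Real.log lam - Real.log mu) / (4 * Real.pi * (lam - mu)) := by
  have hmeas : Measurable fun x => eGreenFn lam x * eGreenFn mu x :=
    (measurable_eGreenFn lam).mul (measurable_eGreenFn mu)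
  have hval := lintegral_eGreenFn_mul_eGreenFn hlam hmu hne
  calc ∫ x : E2, greenFn lam x * greenFn mu x
      = ∫ x : E2, (eGreenFn lam x * eGreenFn mu x).toReal := by
        simp_rw [greenFn_eq_toReal_eGreenFn, ENNReal.toReal_mul]
    _ = (∫⁻ x, eGreenFn lam x * eGreenFn mu x).toReal :=
        integral_toReal hmeas.aemeasurable (ae_lt_top hmeas (by rw [hval]; finiteness))
    _ = _ := by
        rw [hval, ENNReal.toReal_mul, ENNReal.toReal_ofReal (by positivity),
          ENNReal.toReal_ofReal (log_sub_log_div_sub_nonneg hlam hmu)]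
        field_simp

end
end

section
/- For every λ > 0 there exist constants 0 < C₁ ≤ C₂ such that for every x ∈ ℝ² with ‖x‖ ≥ 1, C₁ ‖x‖^{-1/2} e^{−√λ ‖x‖} ≤ G_λ(x) ≤ C₂ ‖x‖^{-1/2} e^{−√λ ‖x‖}. -/
open MeasureTheory

noncomputable section

/-!
Substituting `t = ‖x‖ / (2√λ) · eᵘ` in the heat-kernel integral gives
`G_λ(x) = (2π)⁻¹ K₀(√λ‖x‖)` with `K₀(a) = ½ ∫ exp (-a cosh u) du`.
Since `cosh u ≥ 1 + u²/2`, comparison with a Gaussian gives `K₀(a) ≤ √(π/(2a)) e⁻ᵃ`.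
Since `cosh u ≤ 1 + u²` for `u² ≤ 2`, restricting the integral to `[-v, v]` gives
`K₀(a) ≥ v e^{-a(1 + v²)}`; with `a = √λ‖x‖` and `v = ‖x‖^{-1/2}` the loss `e^{-a v²} = e^{-√λ}`
no longer depends on `x`.
-/

open Real Set

namespace Real

lemma one_add_sq_div_two_le_cosh (x : ℝ) : 1 + x ^ 2 / 2 ≤ cosh x := by
  have h := sum_le_hasSum (Finset.range 2)
    (fun n _ => by rw [pow_mul]; positivity) (hasSum_cosh x)
  simpa [Finset.sum_range_succ] using h

lemma cosh_le_one_add_sq {x : ℝ} (hx : x ^ 2 ≤ 2) : cosh x ≤ 1 + x ^ 2 := by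
  have hy : |x ^ 2 / 2| ≤ 1 := by rw [abs_of_nonneg (by positivity)]; linarith
  have hexp := (le_abs_self _).trans (abs_exp_sub_one_le hy)
  rw [abs_of_nonneg (by positivity)] at hexp
  linarith [cosh_le_exp_half_sq x]

end Real

theorem integral_Ioi_eq_integral_mul_exp {E : Type*} [NormedAddCommGroup E] [NormedSpace ℝ E]
    (g : ℝ → E) {c : ℝ} (hc : 0 < c) :
    ∫ y in Ioi 0, g y = ∫ x, (c * exp x) • g (c * exp x) := by
  have himage : (fun x => c * exp x) '' univ = Ioi 0 := by
    ext y
    refine ⟨by rintro ⟨x, -, rfl⟩; exact mul_pos hc (exp_pos x), fun hy => ?_⟩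
    refine ⟨log (y / c), mem_univ _, ?_⟩
    simp only [exp_log (div_pos hy hc), mul_div_cancel₀ _ hc.ne']
  have := integral_image_eq_integral_abs_deriv_smul MeasurableSet.univ
    (fun x _ => ((hasDerivAt_exp x).const_mul c).hasDerivWithinAt)
    (fun x _ y _ hxy => exp_injective (mul_left_cancel₀ hc.ne' hxy)) g
  simpa [himage, abs_of_pos (mul_pos hc (exp_pos _))] using this

def besselK0 (a : ℝ) : ℝ := (∫ t, exp (-a * cosh t)) / 2

lemma exp_neg_mul_cosh_le {a : ℝ} (ha : 0 ≤ a) (t : ℝ) :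
    exp (-a * cosh t) ≤ exp (-a) * exp (-(a / 2) * t ^ 2) := by
  rw [← exp_add]
  exact exp_le_exp.mpr (by nlinarith [one_add_sq_div_two_le_cosh t])

lemma integrable_exp_neg_mul_cosh {a : ℝ} (ha : 0 < a) :
    Integrable (fun t => exp (-a * cosh t)) :=
  ((integrable_exp_neg_mul_sq (half_pos ha)).const_mul _).mono' (by fun_prop)
    (ae_of_all _ fun t => by
      rw [norm_of_nonneg (exp_pos _).le]
      exact exp_neg_mul_cosh_le ha.le t)

theorem besselK0_le {a : ℝ} (ha : 0 < a) : besselK0 a ≤ √(π / (2 * a)) * exp (-a) := by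
  have hint : ∫ t, exp (-a * cosh t) ≤ ∫ t, exp (-a) * exp (-(a / 2) * t ^ 2) :=
    integral_mono (integrable_exp_neg_mul_cosh ha)
      ((integrable_exp_neg_mul_sq (half_pos ha)).const_mul _) (exp_neg_mul_cosh_le ha.le)
  have hsqrt : √(π / (a / 2)) = 2 * √(π / (2 * a)) := by
    rw [show π / (a / 2) = 2 ^ 2 * (π / (2 * a)) by field_simp,
      sqrt_mul (by norm_num), sqrt_sq (by norm_num)]
  rw [integral_const_mul, integral_gaussian, hsqrt] at hint
  unfold besselK0
  linarith

theorem mul_exp_le_besselK0 {a v : ℝ} (ha : 0 < a) (hv : 0 ≤ v) (hv2 : v ^ 2 ≤ 2) :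
    v * exp (-(a * (1 + v ^ 2))) ≤ besselK0 a := by
  have hcosh : ∀ t ∈ Icc (-v) v, exp (-(a * (1 + v ^ 2))) ≤ exp (-a * cosh t) := by
    intro t ht
    have ht2 : t ^ 2 ≤ v ^ 2 := sq_le_sq' ht.1 ht.2
    exact exp_le_exp.mpr (by nlinarith [cosh_le_one_add_sq (ht2.trans hv2)])
  have hset := setIntegral_ge_of_const_le_real measurableSet_Icc measure_Icc_lt_top.ne hcosh
    (integrable_exp_neg_mul_cosh ha).integrableOn
  have hwhole := setIntegral_le_integral (s := Icc (-v) v) (integrable_exp_neg_mul_cosh ha)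
    (ae_of_all _ fun t => (exp_pos (-a * cosh t)).le)
  rw [measureReal_def, Real.volume_Icc, ENNReal.toReal_ofReal (by linarith)] at hset
  unfold besselK0
  linarith

theorem exp_neg_mul_sqrt_inv_mul_exp_le_besselK0 {s r : ℝ} (hs : 0 < s) (hr : 1 ≤ r) :
    exp (-s) * √r⁻¹ * exp (-(s * r)) ≤ besselK0 (s * r) := by
  have hsq : √r⁻¹ ^ 2 = r⁻¹ := sq_sqrt (inv_nonneg.mpr (zero_le_one.trans hr))
  calc exp (-s) * √r⁻¹ * exp (-(s * r))
      = √r⁻¹ * exp (-(s * r * (1 + √r⁻¹ ^ 2))) := by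
        rw [hsq, show -(s * r * (1 + r⁻¹)) = -s + -(s * r) by field_simp; ring, exp_add]
        ring
    _ ≤ besselK0 (s * r) := by
        refine mul_exp_le_besselK0 (by positivity) (sqrt_nonneg _) ?_
        rw [hsq]
        linarith [inv_le_one_of_one_le₀ hr]

theorem greenFn_eq_besselK0 {l : ℝ} (hl : 0 < l) {x : E2} (hx : x ≠ 0) :
    greenFn l x = (2 * π)⁻¹ * besselK0 (√l * ‖x‖) := by
  obtain ⟨s, hs, rfl⟩ : ∃ s, 0 < s ∧ l = s ^ 2 := ⟨√l, sqrt_pos.mpr hl, (sq_sqrt hl.le).symm⟩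
  unfold greenFn besselK0
  set r := ‖x‖
  have hr : 0 < r := norm_pos_iff.mpr hx
  have hc : 0 < r / (2 * s) := by positivity
  have hintegrand : ∀ t : ℝ,
      (r / (2 * s) * exp t) • ((4 * π * (r / (2 * s) * exp t))⁻¹ *
        exp (-r ^ 2 / (4 * (r / (2 * s) * exp t)) - s ^ 2 * (r / (2 * s) * exp t))) =
      (4 * π)⁻¹ * exp (-(s * r) * cosh t) := by
    intro t
    rw [smul_eq_mul, ← mul_assoc, cosh_eq, exp_neg]
    congr 2
    · field_simp
    · field_simp
      ring
  rw [integral_Ioi_eq_integral_mul_exp _ hc, sqrt_sq hs.le]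
  simp_rw [hintegrand]
  rw [integral_const_mul]
  ring

/-- For `λ > 0`, `G_λ(x) ≍ ‖x‖^{-1/2} e^{-√λ ‖x‖}` for `‖x‖ ≥ 1`: there are constants
`0 < C₁ ≤ C₂` with `C₁‖x‖^{-1/2} e^{-√λ‖x‖} ≤ G_λ(x) ≤ C₂‖x‖^{-1/2} e^{-√λ‖x‖}`. -/
theorem green_exponential_decay (lam : ℝ) (hlam : 0 < lam) :
    ∃ C₁ C₂ : ℝ, 0 < C₁ ∧ C₁ ≤ C₂ ∧ ∀ x : E2, 1 ≤ ‖x‖ →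
      C₁ * ‖x‖ ^ (-(1 / 2) : ℝ) * Real.exp (-Real.sqrt lam * ‖x‖) ≤ greenFn lam x ∧
      greenFn lam x ≤ C₂ * ‖x‖ ^ (-(1 / 2) : ℝ) * Real.exp (-Real.sqrt lam * ‖x‖) := by
  set s := √lam
  have hs : 0 < s := sqrt_pos.mpr hlam
  set C₂ := (2 * π)⁻¹ * √(π / (2 * s))
  refine ⟨min ((2 * π)⁻¹ * exp (-s)) C₂, C₂, lt_min (by positivity) (by positivity),
    min_le_right _ _, fun x hx => ?_⟩
  have hr : 0 < ‖x‖ := one_pos.trans_le hx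
  rw [greenFn_eq_besselK0 hlam (norm_pos_iff.mp hr),
    show ‖x‖ ^ (-(1 / 2) : ℝ) = √‖x‖⁻¹ by rw [sqrt_eq_rpow, inv_rpow hr.le, rpow_neg hr.le]]
  set r := ‖x‖
  constructor
  · calc min ((2 * π)⁻¹ * exp (-s)) C₂ * √r⁻¹ * exp (-s * r)
        ≤ (2 * π)⁻¹ * (exp (-s) * √r⁻¹ * exp (-(s * r))) := by
          rw [neg_mul, ← mul_assoc, ← mul_assoc]
          gcongr
          exact min_le_left _ _
      _ ≤ (2 * π)⁻¹ * besselK0 (s * r) := by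
          gcongr
          exact exp_neg_mul_sqrt_inv_mul_exp_le_besselK0 hs hx
  · calc (2 * π)⁻¹ * besselK0 (s * r)
        ≤ (2 * π)⁻¹ * (√(π / (2 * (s * r))) * exp (-(s * r))) := by
          gcongr
          exact besselK0_le (by positivity)
      _ = C₂ * √r⁻¹ * exp (-s * r) := by
          rw [show π / (2 * (s * r)) = π / (2 * s) * r⁻¹ by field_simp,
            sqrt_mul (by positivity), neg_mul]
          ring

end
end

section
/- For every real-valued Schwartz function f on ℝ², the Pohozaev-type identity ∫_{ℝ²} (−Δf(x) + f(x)) (x·∇f(x)) dx = −∫_{ℝ²} f(x)² dx holds. -/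
/-!
Let `E f x = Df(x) x` be the Euler (dilation) operator on Schwartz functions in dimension `n`.
Integrating by parts against the coordinate functionals gives `∫ E h = -n ∫ h`; applied to
`h = f g` this makes `-E - n` the adjoint of `E`, so `∫ f · E f = -(n/2) ∫ f²`. Since
`∂_v (E f) = ∂_v f + E (∂_v f)`, one more integration by parts gives
`∫ ∂_v² f · E f = (n/2 - 1) ∫ (∂_v f)²`, so the Laplacian term vanishes exactly when `n = 2`.
-/

open MeasureTheory

noncomputable section

/-- The Laplacian `Δf(x) = ∑ᵢ ∂²f/∂xᵢ²(x)` of a function on ℝ². -/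
noncomputable def lapl {F : Type*} [NormedAddCommGroup F] [NormedSpace ℝ F]
    (f : E2 → F) (x : E2) : F :=
  ∑ i : Fin 2, fderiv ℝ (fun y => fderiv ℝ f y (EuclideanSpace.single i 1)) x
    (EuclideanSpace.single i 1)

open scoped SchwartzMap LineDeriv Laplacian

namespace SchwartzMap

section NormedSpace

variable {D F : Type*} [NormedAddCommGroup D] [NormedSpace ℝ D]
  [NormedAddCommGroup F] [NormedSpace ℝ F]

def euler : 𝓢(D, F) →L[ℝ] 𝓢(D, F) :=
  bilinLeftCLM (ContinuousLinearMap.id ℝ (D →L[ℝ] F)) Function.HasTemperateGrowth.id ∘L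
    fderivCLM ℝ D F

theorem euler_apply (f : 𝓢(D, F)) (x : D) : euler f x = fderiv ℝ f x x := rfl

theorem euler_eq_sum {ι : Type*} [Fintype ι] (b : Module.Basis ι ℝ D) (f : 𝓢(D, F)) (x : D) :
    euler f x = ∑ i, b.coord i x • ∂_{b i} f x := by
  conv_lhs => rw [euler_apply]; arg 2; rw [← b.sum_repr x]
  simp only [map_sum, map_smul, Module.Basis.coord_apply, lineDerivOp_apply_eq_fderiv]

theorem lineDerivOp_lineDerivOp_apply (f : 𝓢(D, F)) (v w x : D) :
    ∂_{v} (∂_{w} f) x = fderiv ℝ (fderiv ℝ f) x v w := by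
  have hf' : DifferentiableAt ℝ (fderiv ℝ f) x := (fderivCLM ℝ D F f).differentiableAt
  change fderiv ℝ (fun y => fderiv ℝ f y w) x v = _
  rw [fderiv_clm_apply hf' (differentiableAt_const w)]
  simp

theorem lineDerivOp_comm (f : 𝓢(D, F)) (v w : D) : ∂_{v} (∂_{w} f) = ∂_{w} (∂_{v} f) := by
  ext x
  rw [lineDerivOp_lineDerivOp_apply, lineDerivOp_lineDerivOp_apply]
  have h2 : minSmoothness ℝ 2 ≤ ((⊤ : ℕ∞) : WithTop ℕ∞) := by
    rw [minSmoothness_of_isRCLikeNormedField]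
    exact WithTop.coe_le_coe.mpr le_top
  exact ((f.smooth ⊤).contDiffAt.isSymmSndFDerivAt h2).eq v w

theorem lineDerivOp_euler (f : 𝓢(D, F)) (v : D) : ∂_{v} (euler f) = ∂_{v} f + euler (∂_{v} f) := by
  ext x
  have hf' : DifferentiableAt ℝ (fderiv ℝ f) x := (fderivCLM ℝ D F f).differentiableAt
  rw [add_apply, euler_apply, ← lineDerivOp_apply_eq_fderiv x (∂_{v} f), ← lineDerivOp_comm,
    lineDerivOp_lineDerivOp_apply]
  change fderiv ℝ (fun y => fderiv ℝ f y y) x v = _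
  rw [fderiv_clm_apply (u := fun y => y) hf' differentiableAt_fun_id]
  simp [lineDerivOp_apply_eq_fderiv]

variable [FiniteDimensional ℝ D] [MeasurableSpace D] [BorelSpace D] {μ : Measure D}
  [μ.IsAddHaarMeasure]

theorem integrable_clm_smul (ℓ : D →L[ℝ] ℝ) (f : 𝓢(D, F)) :
    Integrable (fun x => ℓ x • f x) μ := by
  simpa only [smulLeftCLM_apply ℓ.hasTemperateGrowth] using (smulLeftCLM F ℓ f).integrable (μ := μ)

theorem integral_clm_smul_lineDerivOp (ℓ : D →L[ℝ] ℝ) (f : 𝓢(D, F)) (v : D) :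
    ∫ x, ℓ x • ∂_{v} f x ∂μ = -(ℓ v • ∫ x, f x ∂μ) := by
  change ∫ x, ℓ x • fderiv ℝ f x v ∂μ = _
  rw [integral_smul_fderiv_eq_neg_fderiv_smul_of_integrable (f := ℓ)
    ((f.integrable.smul (ℓ v)).congr (.of_forall fun x => by simp))
    (integrable_clm_smul ℓ (∂_{v} f)) (integrable_clm_smul ℓ f)
    (fun x _ => ℓ.differentiableAt) (fun x _ => f.differentiableAt)]
  simp [integral_smul]

theorem integral_euler (f : 𝓢(D, F)) :
    ∫ x, euler f x ∂μ = -((Module.finrank ℝ D : ℝ) • ∫ x, f x ∂μ) := by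
  let b := Module.finBasis ℝ D
  let ℓ i := LinearMap.toContinuousLinearMap (b.coord i)
  have hℓ (i) : ∫ x, ℓ i x • ∂_{b i} f x ∂μ = -∫ x, f x ∂μ := by
    rw [integral_clm_smul_lineDerivOp]
    simp [ℓ]
  have hsum (x) : euler f x = ∑ i, ℓ i x • ∂_{b i} f x := euler_eq_sum b f x
  simp_rw [hsum]
  rw [integral_finsetSum _ fun i _ => integrable_clm_smul (ℓ i) (∂_{b i} f)]
  simp [hℓ, Nat.cast_smul_eq_nsmul]

theorem integrable_mul (g h : 𝓢(D, ℝ)) : Integrable (fun x => g x * h x) μ :=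
  (pairing (ContinuousLinearMap.mul ℝ ℝ) g h).integrable

theorem integral_mul_euler (g h : 𝓢(D, ℝ)) :
    ∫ x, g x * euler h x ∂μ =
      -(Module.finrank ℝ D * ∫ x, g x * h x ∂μ) - ∫ x, euler g x * h x ∂μ := by
  have hprod (x) : euler (pairing (ContinuousLinearMap.mul ℝ ℝ) g h) x =
      euler g x * h x + g x * euler h x := by
    change fderiv ℝ (fun y => g y * h y) x x = _
    rw [fderiv_fun_mul g.differentiableAt h.differentiableAt]
    simp only [add_apply, smul_apply, smul_eq_mul, euler_apply]
    ring
  have h := integral_euler (μ := μ) (pairing (ContinuousLinearMap.mul ℝ ℝ) g h)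
  simp only [hprod, pairing_apply_apply, ContinuousLinearMap.mul_apply', smul_eq_mul] at h
  rw [integral_add (integrable_mul _ _) (integrable_mul _ _)] at h
  linarith

theorem integral_mul_euler_self (f : 𝓢(D, ℝ)) :
    ∫ x, f x * euler f x ∂μ = -(Module.finrank ℝ D / 2 * ∫ x, f x ^ 2 ∂μ) := by
  have h := integral_mul_euler (μ := μ) f f
  simp only [mul_comm (euler f _), ← sq] at h
  linarith

theorem integral_lineDerivOp_lineDerivOp_mul_euler (f : 𝓢(D, ℝ)) (v : D) :
    ∫ x, ∂_{v} (∂_{v} f) x * euler f x ∂μ =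
      (Module.finrank ℝ D / 2 - 1) * ∫ x, ∂_{v} f x ^ 2 ∂μ := by
  have ibp := integral_mul_lineDerivOp_right_eq_neg_left (μ := μ) (euler f) (∂_{v} f) v
  simp only [lineDerivOp_euler, add_apply, add_mul] at ibp
  rw [integral_add (integrable_mul _ _) (integrable_mul _ _)] at ibp
  have hself := integral_mul_euler_self (μ := μ) (∂_{v} f)
  simp only [mul_comm (euler _ _), ← sq] at ibp hself ⊢
  linarith

end NormedSpace

section InnerProductSpace

variable {D : Type*} [NormedAddCommGroup D] [InnerProductSpace ℝ D] [FiniteDimensional ℝ D]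
  [MeasurableSpace D] [BorelSpace D] {μ : Measure D} [μ.IsAddHaarMeasure]

theorem integral_laplacian_mul_euler {ι : Type*} [Fintype ι] (b : OrthonormalBasis ι ℝ D)
    (f : 𝓢(D, ℝ)) :
    ∫ x, Δ f x * euler f x ∂μ = (Module.finrank ℝ D / 2 - 1) * ∑ i, ∫ x, ∂_{b i} f x ^ 2 ∂μ := by
  simp only [laplacian_eq_sum b, sum_apply, Finset.sum_mul]
  rw [integral_finsetSum _ fun i _ => integrable_mul _ _, Finset.mul_sum]
  simp only [integral_lineDerivOp_lineDerivOp_mul_euler]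

end InnerProductSpace

end SchwartzMap

open SchwartzMap

theorem lapl_eq_laplacian {F : Type*} [NormedAddCommGroup F] [NormedSpace ℝ F] (f : 𝓢(E2, F))
    (x : E2) : lapl (fun y => f y) x = Δ f x := by
  rw [laplacian_eq_sum (EuclideanSpace.basisFun (Fin 2) ℝ), sum_apply]
  simp only [lapl, EuclideanSpace.basisFun_apply]
  rfl

/-- Pohozaev-type identity: for every real-valued Schwartz function `f` on ℝ²,
`∫ (-Δf(x) + f(x)) (x·∇f(x)) dx = -∫ f(x)² dx`, where `x·∇f(x)` is the dilation derivative. -/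
theorem pohozaev_identity (f : SchwartzMap E2 ℝ) :
    ∫ x : E2, (-(lapl (fun y => f y) x) + f x) * fderiv ℝ (fun y => f y) x x
      = -∫ x : E2, f x ^ 2 := by
  have hsplit (x : E2) : (-(lapl (fun y => f y) x) + f x) * fderiv ℝ (fun y => f y) x x =
      f x * euler f x - Δ f x * euler f x := by
    rw [lapl_eq_laplacian, euler_apply]
    ring
  simp_rw [hsplit]
  rw [integral_sub (integrable_mul _ _) (integrable_mul _ _), integral_mul_euler_self,
    integral_laplacian_mul_euler (EuclideanSpace.basisFun (Fin 2) ℝ), finrank_euclideanSpace_fin]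
  norm_num

end
end
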